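/- arXiv:1803.10811 — 7 statements merged into one kernel-verified Lean document; each statement's English description precedes it below -/
import Mathlib

section
/- For N ≥ 2, the polynomial x^N + x - 1 is irreducible over ℚ whenever N is not congruent to 5 mod 6, and x^N - x + 1 is irreducible over ℚ whenever N is not congruent to 2 mod 6. -/
/-!
The substitution `X ↦ -X`, possibly followed by negation, maps `X ^ N - X - 1` and
`X ^ N + X + 1` onto the two trinomials of the theorem, the parity of `N` deciding which goes
where. Selmer proved `X ^ N - X - 1` irreducible for `N ≠ 1`. For `X ^ N + X + 1` the same
argument works: by Ljunggren's criterion a unit trinomial is irreducible once it has no complex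
root in common with its mirror `X ^ N + X ^ (N - 1) + 1`, and a common root `z` would satisfy
`z ^ (N - 1) = z`, hence `z ^ 2 + z + 1 = 0`, so `z` is a primitive cube root of unity, which
forces `N ≡ 2 mod 3`.
-/

open Polynomial

namespace Polynomial

theorem X_pow_add_X_add_one_irreducible_aux {K : Type*} [Field K] [CharZero K] {n : ℕ}
    (hn0 : 0 < n) (hn : n % 3 ≠ 2) (z : K) :
    ¬(z ^ n + z + 1 = 0 ∧ z ^ n + z ^ (n - 1) + 1 = 0) := by
  rintro ⟨h1, h2⟩
  have hz0 : z ≠ 0 := by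
    rintro rfl
    simp [zero_pow hn0.ne'] at h1
  have hzn : z ^ n = z ^ 2 := by
    rw [← Nat.sub_add_cancel hn0, pow_succ, (by linear_combination h2 - h1 : z ^ (n - 1) = z), sq]
  have hcyc : z ^ 2 + z + 1 = 0 := hzn ▸ h1
  have h3 : z ^ 3 = 1 := by linear_combination (z - 1) * hcyc
  have hz1 : z = 1 := by
    rw [← Nat.mod_add_div n 3, pow_add, pow_mul, h3, one_pow, mul_one] at hzn
    rcases (by omega : n % 3 = 0 ∨ n % 3 = 1) with h | h <;> rw [h] at hzn
    · linear_combination h3 + z * hzn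
    · have : z * (z - 1) = 0 := by linear_combination -hzn
      exact sub_eq_zero.mp ((mul_eq_zero.mp this).resolve_left hz0)
  subst hz1
  norm_num at hcyc

theorem X_pow_add_X_add_one_eq_trinomial {R : Type*} [CommRing R] (n : ℕ) :
    (X ^ n + X + 1 : R[X]) = trinomial 0 1 n 1 1 1 := by
  simp only [trinomial, C_1]
  ring

theorem X_pow_add_X_add_one_irreducible {n : ℕ} (hn1 : 1 < n) (hn : n % 3 ≠ 2) :
    Irreducible (X ^ n + X + 1 : ℤ[X]) := by
  rw [X_pow_add_X_add_one_eq_trinomial]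
  apply IsUnitTrinomial.irreducible_of_coprime' ⟨0, 1, n, zero_lt_one, hn1, 1, 1, 1, rfl⟩
  rintro z ⟨h1, h2⟩
  apply X_pow_add_X_add_one_irreducible_aux (by omega) hn z
  rw [trinomial_mirror zero_lt_one hn1 (1 : ℤˣ).ne_zero (1 : ℤˣ).ne_zero] at h2
  simp_rw [trinomial, aeval_add, aeval_mul, aeval_X_pow, aeval_C, Units.val_one,
    map_one] at h1 h2
  exact ⟨by linear_combination h1, by linear_combination h2⟩

theorem X_pow_add_X_add_one_irreducible_rat {n : ℕ} (hn1 : 1 < n) (hn : n % 3 ≠ 2) :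
    Irreducible (X ^ n + X + 1 : ℚ[X]) := by
  have h := (IsPrimitive.Int.irreducible_iff_irreducible_map_cast ?_).mp
    (X_pow_add_X_add_one_irreducible hn1 hn)
  · rwa [Polynomial.map_add, Polynomial.map_add, Polynomial.map_pow, Polynomial.map_one,
      Polynomial.map_X] at h
  · rw [X_pow_add_X_add_one_eq_trinomial]
    exact (trinomial_monic zero_lt_one hn1).isPrimitive

theorem _root_.Irreducible.comp_neg_X {R : Type*} [CommRing R] {p : R[X]} (hp : Irreducible p) :
    Irreducible (p.comp (-X)) := by
  simpa [comp_eq_aeval] using hp.map algEquivAevalNegX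

end Polynomial

theorem Irreducible.neg {α : Type*} [Monoid α] [HasDistribNeg α] {a : α} (ha : Irreducible a) :
    Irreducible (-a) :=
  Associated.irreducible ⟨-1, mul_neg_one a⟩ ha

theorem irreducible_trinomials_mod_six (N : ℕ) (hN : 2 ≤ N) :
    (¬ N % 6 = 5 → Irreducible (X ^ N + X - 1 : ℚ[X])) ∧
    (¬ N % 6 = 2 → Irreducible (X ^ N - X + 1 : ℚ[X])) := by
  have selmer : Irreducible (X ^ N - X - 1 : ℚ[X]) :=
    X_pow_sub_X_sub_one_irreducible_rat (by omega)
  have ljunggren (hN3 : N % 3 ≠ 2) : Irreducible (X ^ N + X + 1 : ℚ[X]) :=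
    X_pow_add_X_add_one_irreducible_rat (by omega) hN3
  rcases Nat.even_or_odd N with hN2 | hN2
  · have hX : (-X : ℚ[X]) ^ N = X ^ N := hN2.neg_pow X
    obtain ⟨k, rfl⟩ := hN2
    refine ⟨fun _ => ?_, fun hN6 => ?_⟩
    · convert selmer.comp_neg_X using 1
      simp only [sub_comp, X_pow_comp, X_comp, one_comp, hX]
      ring
    · convert (ljunggren (by omega)).comp_neg_X using 1
      simp only [add_comp, X_pow_comp, X_comp, one_comp, hX]
      ring
  · have hX : (-X : ℚ[X]) ^ N = -X ^ N := hN2.neg_pow X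
    obtain ⟨k, rfl⟩ := hN2
    refine ⟨fun hN6 => ?_, fun _ => ?_⟩
    · convert (ljunggren (by omega)).comp_neg_X.neg using 1
      simp only [add_comp, X_pow_comp, X_comp, one_comp, hX]
      ring
    · convert selmer.comp_neg_X.neg using 1
      simp only [sub_comp, X_pow_comp, X_comp, one_comp, hX]
      ring
end

section
/- Let a, b, f ∈ ℤ[x] with deg a < 2m, deg b < 2m, deg f < m, f(0) ≠ 0, and ab ≡ f mod x^{2m}. Write a|_m and b|_m for the truncations of a and b to degree < m. Then exactly one of the following holds: (1) ab = f; (2) ab ≠ f, a|_m · b|_m ≠ f, and ‖a|_m‖ + ‖b|_m‖ ≤ ‖a‖ + ‖b‖ - 1; (3) ab ≠ f, a|_m · b|_m = f, and ‖a|_m‖ + ‖b|_m‖ ≤ ‖a‖ + ‖b‖ - 2. -/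
/-!
Write `a = a₀ + X^m a₁` with `deg a₀ < m`. The weight is additive, `‖a‖ = ‖a₀‖ + ‖a₁‖`, so every
nonzero tail `a₁`, `b₁` costs at least `1`. If `a₀ b₀ ≠ f`, some tail is nonzero: otherwise
`deg ab < 2m` and the congruence forces `ab = f`. If `a₀ b₀ = f` and `a₁ = 0`, then
`X^{2m} ∣ ab - f = a X^m b₁`; since `a(0) ≠ 0` this gives `X^m ∣ b₁`, so `b₁ = 0` by degree and
again `ab = f`. Hence in the third case both tails are nonzero.
-/

open Polynomial

/-- The weight of an integer polynomial: the sum of the squares of its coefficients. -/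
def weight (f : ℤ[X]) : ℤ :=
  ∑ i ∈ Finset.range (f.natDegree + 1), (f.coeff i) ^ 2

namespace Polynomial

variable {R : Type*} [CommRing R]

theorem natDegree_modByMonic_X_pow_lt [Nontrivial R] {m : ℕ} (hm : 0 < m) (p : R[X]) :
    (p %ₘ X ^ m).natDegree < m := by
  have hX : (X : R[X]) ^ m ≠ 1 := fun h => by simpa [hm.ne'] using congrArg natDegree h
  simpa using natDegree_modByMonic_lt p (monic_X_pow m) hX

theorem modByMonic_eq_self_iff_divByMonic_eq_zero [Nontrivial R] {p q : R[X]} (hq : q.Monic) :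
    p %ₘ q = p ↔ p /ₘ q = 0 :=
  (modByMonic_eq_self_iff hq).trans (divByMonic_eq_zero_iff hq).symm

theorem eq_of_X_pow_dvd_sub_of_natDegree_lt {p q : R[X]} {n : ℕ} (h : X ^ n ∣ p - q)
    (hp : p.natDegree < n) (hq : q.natDegree < n) : p = q := by
  ext d
  by_cases hd : d < n
  · simpa [sub_eq_zero] using X_pow_dvd_iff.mp h d hd
  · rw [coeff_eq_zero_of_natDegree_lt (by omega), coeff_eq_zero_of_natDegree_lt (by omega)]

variable [IsDomain R]

theorem modByMonic_X_pow_eq_self_of_X_pow_dvd_mul_sub {a b : R[X]} {m n : ℕ}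
    (ha : a.coeff 0 ≠ 0) (hb : b.natDegree < m + n) (h : X ^ (m + n) ∣ a * (b - b %ₘ X ^ m)) :
    b %ₘ X ^ m = b := by
  set q := b /ₘ X ^ m
  have hsplit : b - b %ₘ X ^ m = X ^ m * q := by
    rw [sub_eq_iff_eq_add', modByMonic_add_div b (X ^ m)]
  rw [hsplit, mul_left_comm, pow_add, mul_dvd_mul_iff_left (pow_ne_zero m X_ne_zero)] at h
  have hq : X ^ n ∣ q := prime_X.pow_dvd_of_dvd_mul_left n (mt X_dvd_iff.mp ha) h
  rw [modByMonic_eq_self_iff_divByMonic_eq_zero (monic_X_pow m)]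
  by_contra hq0
  have hmb : m ≤ b.natDegree := by
    have hdeg := mt (divByMonic_eq_zero_iff (monic_X_pow m)).mpr hq0
    rw [degree_X_pow, not_lt] at hdeg
    exact le_natDegree_of_coe_le_degree hdeg
  have hnq := natDegree_le_of_dvd hq hq0
  rw [natDegree_X_pow, natDegree_divByMonic _ (monic_X_pow m), natDegree_X_pow] at hnq
  omega

theorem mul_eq_of_mul_modByMonic_X_pow_eq {a b f : R[X]} {m n : ℕ}
    (ha : a.coeff 0 ≠ 0) (hb : b.natDegree < m + n) (hcong : X ^ (m + n) ∣ a * b - f)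
    (h : a * (b %ₘ X ^ m) = f) : a * b = f := by
  have hb' : b %ₘ X ^ m = b :=
    modByMonic_X_pow_eq_self_of_X_pow_dvd_mul_sub ha hb (by rwa [mul_sub, h])
  rwa [hb'] at h

end Polynomial

theorem weight_eq_sum_range_of_degree_lt {p : ℤ[X]} {N : ℕ} (h : p.degree < N) :
    weight p = ∑ i ∈ Finset.range N, p.coeff i ^ 2 := by
  rcases eq_or_ne p 0 with rfl | hp
  · simp [weight]
  · exact (sum_over_range p (f := fun _ c => c ^ 2) (by simp)).symm.trans
      (sum_over_range' p (by simp) N ((natDegree_lt_iff_degree_lt hp).mpr h))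

theorem weight_add_X_pow_mul {r : ℤ[X]} {m : ℕ} (hr : r.degree < m) (q : ℤ[X]) :
    weight (r + X ^ m * q) = weight r + weight q := by
  have hdeg : (r + X ^ m * q).degree < ↑(m + (q.natDegree + 1)) := by
    refine (degree_add_le _ _).trans_lt (max_lt (hr.trans_le (by norm_cast; omega)) ?_)
    rcases eq_or_ne q 0 with rfl | hq
    · simp
    · rw [degree_eq_natDegree (by simpa using hq), natDegree_X_pow_mul (n := m) hq]
      norm_cast
      omega
  rw [weight_eq_sum_range_of_degree_lt hdeg, weight_eq_sum_range_of_degree_lt hr,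
    Finset.sum_range_add]
  congr 1 <;> refine Finset.sum_congr rfl fun i hi => ?_
  · rw [Finset.mem_range] at hi
    rw [coeff_add, coeff_X_pow_mul', if_neg (by omega), add_zero]
  · rw [coeff_add, coeff_eq_zero_of_degree_lt (hr.trans_le (by norm_cast; omega)), zero_add,
      add_comm, coeff_X_pow_mul]

theorem weight_eq_weight_modByMonic_add_weight_divByMonic (p : ℤ[X]) (m : ℕ) :
    weight p = weight (p %ₘ X ^ m) + weight (p /ₘ X ^ m) := by
  conv_lhs => rw [← modByMonic_add_div p (X ^ m)]
  exact weight_add_X_pow_mul (by simpa using degree_modByMonic_lt p (monic_X_pow m)) _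

theorem weight_nonneg (p : ℤ[X]) : 0 ≤ weight p :=
  Finset.sum_nonneg fun _ _ => sq_nonneg _

theorem one_le_weight {p : ℤ[X]} (hp : p ≠ 0) : 1 ≤ weight p :=
  calc 1 ≤ p.leadingCoeff ^ 2 :=
        (one_le_sq_iff_one_le_abs _).mpr (Int.one_le_abs (leadingCoeff_ne_zero.mpr hp))
    _ ≤ weight p := Finset.single_le_sum (f := fun i => p.coeff i ^ 2) (fun _ _ => sq_nonneg _)
        (Finset.self_mem_range_succ _)

theorem weight_modByMonic_X_pow_le (p : ℤ[X]) (m : ℕ) : weight (p %ₘ X ^ m) ≤ weight p := by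
  linarith [weight_eq_weight_modByMonic_add_weight_divByMonic p m, weight_nonneg (p /ₘ X ^ m)]

theorem weight_modByMonic_X_pow_add_one_le {p : ℤ[X]} {m : ℕ} (hp : p %ₘ X ^ m ≠ p) :
    weight (p %ₘ X ^ m) + 1 ≤ weight p := by
  have := one_le_weight (mt (modByMonic_eq_self_iff_divByMonic_eq_zero (monic_X_pow m)).mpr hp)
  linarith [weight_eq_weight_modByMonic_add_weight_divByMonic p m]

theorem truncation_trichotomy (m : ℕ) (a b f : ℤ[X])
    (ha : a.natDegree < 2 * m) (hb : b.natDegree < 2 * m) (hf : f.natDegree < m)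
    (hf0 : f.coeff 0 ≠ 0) (hcong : (X : ℤ[X]) ^ (2 * m) ∣ a * b - f) :
    (a * b = f) ∨
    (a * b ≠ f ∧ (a %ₘ X ^ m) * (b %ₘ X ^ m) ≠ f ∧
      weight (a %ₘ X ^ m) + weight (b %ₘ X ^ m) ≤ weight a + weight b - 1) ∨
    (a * b ≠ f ∧ (a %ₘ X ^ m) * (b %ₘ X ^ m) = f ∧
      weight (a %ₘ X ^ m) + weight (b %ₘ X ^ m) ≤ weight a + weight b - 2) := by
  have hm : 0 < m := by omega
  have h0 : a.coeff 0 * b.coeff 0 = f.coeff 0 := by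
    have := X_dvd_iff.mp ((dvd_pow_self X (by omega)).trans hcong)
    rwa [coeff_sub, mul_coeff_zero, sub_eq_zero] at this
  have ha0 : a.coeff 0 ≠ 0 := left_ne_zero_of_mul (h0 ▸ hf0)
  have hb0 : b.coeff 0 ≠ 0 := right_ne_zero_of_mul (h0 ▸ hf0)
  rw [two_mul] at hcong ha hb
  have hwa := weight_modByMonic_X_pow_le a m
  have hwb := weight_modByMonic_X_pow_le b m
  by_cases hab : a * b = f
  · exact Or.inl hab
  by_cases htr : (a %ₘ X ^ m) * (b %ₘ X ^ m) = f
  · obtain ⟨ha', hb'⟩ : a %ₘ X ^ m ≠ a ∧ b %ₘ X ^ m ≠ b := by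
      refine ⟨fun hae => hab ?_, fun hbe => hab ?_⟩
      · exact mul_eq_of_mul_modByMonic_X_pow_eq ha0 hb hcong (by rwa [hae] at htr)
      · rw [mul_comm] at hcong htr ⊢
        exact mul_eq_of_mul_modByMonic_X_pow_eq hb0 ha hcong (by rwa [hbe] at htr)
    exact Or.inr (Or.inr ⟨hab, htr, by linarith [weight_modByMonic_X_pow_add_one_le ha',
      weight_modByMonic_X_pow_add_one_le hb']⟩)
  · have htail : a %ₘ X ^ m ≠ a ∨ b %ₘ X ^ m ≠ b := by
      by_contra! ⟨hae, hbe⟩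
      refine hab (eq_of_X_pow_dvd_sub_of_natDegree_lt hcong ?_ (by omega))
      have hda := hae ▸ natDegree_modByMonic_X_pow_lt hm a
      have hdb := hbe ▸ natDegree_modByMonic_X_pow_lt hm b
      exact natDegree_mul_le.trans_lt (by omega)
    refine Or.inr (Or.inl ⟨hab, htr, ?_⟩)
    rcases htail with ha' | hb'
    · linarith [weight_modByMonic_X_pow_add_one_le ha']
    · linarith [weight_modByMonic_X_pow_add_one_le hb']
end

section
/- Let l ≥ 5 be prime and 1 ≤ k ≤ l²/2. If a = a₀ + a₁x and b = b₀ + b₁x are integer polynomials with 1 ≤ a₀ ≤ b₀, a₀b₀ = l, a₀b₁ + a₁b₀ = kl, and a₀² + a₁² + b₀² + b₁² ≤ 1 + k² + l², then (a₀, a₁, b₀, b₁) = (1, k, l, 0). -/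
/-! Since `l` is prime and `1 ≤ a₀ ≤ b₀`, the factorisation `a₀ b₀ = l` forces `a₀ = 1`, `b₀ = l`,
and then `b₁ = (k - a₁) l`. Writing `d = k - a₁`, the weight bound becomes
`d (d (1 + l²) - 2k) ≤ 0`, which for `0 < 2k ≤ l²` leaves only `d = 0`. -/

theorem Int.eq_one_of_mul_eq_prime {p a b : ℤ} (hp : Prime p) (ha : 1 ≤ a) (hab : a ≤ b)
    (h : a * b = p) : a = 1 := by
  rcases hp.irreducible.isUnit_or_isUnit h.symm with hu | hu
  · rcases Int.isUnit_iff.mp hu with h | h <;> omega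
  · have hb : b = 1 := by rcases Int.isUnit_iff.mp hu with h | h <;> omega
    have : p = 1 := by rw [← h, hb]; omega
    exact absurd (this ▸ hp) not_prime_one

theorem Int.eq_of_sq_add_sub_sq_mul_le_sq {k c m : ℤ} (hk : 0 ≤ k) (hkm : 2 * k ≤ m)
    (h : c ^ 2 + (k - c) ^ 2 * m ≤ k ^ 2) : c = k := by
  obtain ⟨d, rfl⟩ : ∃ d, c = k - d := ⟨k - c, by ring⟩
  have key : d * (d * (1 + m) - 2 * k) ≤ 0 := by nlinarith
  rcases lt_trichotomy d 0 with hd | rfl | hd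
  · nlinarith
  · ring
  · have : d * (1 + m) ≤ 2 * k := le_of_sub_nonpos (nonpos_of_mul_nonpos_right key hd)
    nlinarith

theorem m0_linear_constant_prime_general (l k : ℤ) (hlp : Prime l)
    (hk1 : 1 ≤ k) (hk2 : 2 * k ≤ l ^ 2)
    (a₀ a₁ b₀ b₁ : ℤ) (ha₀ : 1 ≤ a₀) (hab : a₀ ≤ b₀)
    (h1 : a₀ * b₀ = l) (h2 : a₀ * b₁ + a₁ * b₀ = k * l)
    (hw : a₀ ^ 2 + a₁ ^ 2 + b₀ ^ 2 + b₁ ^ 2 ≤ 1 + k ^ 2 + l ^ 2) :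
    a₀ = 1 ∧ a₁ = k ∧ b₀ = l ∧ b₁ = 0 := by
  obtain rfl : a₀ = 1 := Int.eq_one_of_mul_eq_prime hlp ha₀ hab h1
  obtain rfl : b₀ = l := by simpa using h1
  obtain rfl : b₁ = (k - a₁) * b₀ := by linarith
  obtain rfl : a₁ = k :=
    Int.eq_of_sq_add_sub_sq_mul_le_sq (by omega) hk2 (by nlinarith)
  simp

theorem m0_linear_constant_prime (l k : ℤ) (hl : 5 ≤ l) (hlp : Prime l)
    (hk1 : 1 ≤ k) (hk2 : 2 * k ≤ l ^ 2)
    (a₀ a₁ b₀ b₁ : ℤ) (ha₀ : 1 ≤ a₀) (hab : a₀ ≤ b₀)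
    (h1 : a₀ * b₀ = l) (h2 : a₀ * b₁ + a₁ * b₀ = k * l)
    (hw : a₀ ^ 2 + a₁ ^ 2 + b₀ ^ 2 + b₁ ^ 2 ≤ 1 + k ^ 2 + l ^ 2) :
    a₀ = 1 ∧ a₁ = k ∧ b₀ = l ∧ b₁ = 0 :=
  m0_linear_constant_prime_general l k hlp hk1 hk2 a₀ a₁ b₀ b₁ ha₀ hab h1 h2 hw
end

section
/- For every integer k ≥ 1, there exist polynomials a, b ∈ ℤ[x] with a(0) = b(0) = 1, a·b ≡ 1 + 2x^k mod x^{4k}, a·b ≠ 1 + 2x^k, and ‖a‖ + ‖b‖ ≤ ‖1‖ + ‖1 + 2x^k‖ = 6. -/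
open Polynomial

lemma weight_eq_sum_support (f : ℤ[X]) :
    weight f = ∑ i ∈ f.support, (f.coeff i) ^ 2 := by
  rw [weight]
  symm
  apply Finset.sum_subset f.supp_subset_range_natDegree_succ
  intro x _ hx
  simp [Polynomial.notMem_support_iff.mp hx]

lemma weight_le_of_support_subset (f : ℤ[X]) (s : Finset ℕ) (h : f.support ⊆ s) :
    weight f ≤ ∑ i ∈ s, (f.coeff i) ^ 2 := by
  rw [weight_eq_sum_support]
  exact Finset.sum_le_sum_of_subset_of_nonneg h (fun i _ _ => sq_nonneg _)

theorem m0_lower_bound_one_add_two_pow (k : ℕ) (hk : 1 ≤ k) :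
    ∃ a b : ℤ[X], a.coeff 0 = 1 ∧ b.coeff 0 = 1 ∧
      (X : ℤ[X]) ^ (4 * k) ∣ a * b - (1 + 2 * X ^ k) ∧
      a * b ≠ 1 + 2 * X ^ k ∧
      weight a + weight b ≤ 6 := by
  have hk0 : k ≠ 0 := by omega
  set a : ℤ[X] := 1 + X ^ k - X ^ (2 * k) with ha
  set b : ℤ[X] := 1 + X ^ k + X ^ (3 * k) with hb
  have h2 : (X : ℤ[X]) ^ (2 * k) = (X ^ k) ^ 2 := by rw [pow_mul']
  have h3 : (X : ℤ[X]) ^ (3 * k) = (X ^ k) ^ 3 := by rw [pow_mul']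
  have h4 : (X : ℤ[X]) ^ (4 * k) = (X ^ k) ^ 4 := by rw [pow_mul']
  have h5 : (X : ℤ[X]) ^ (5 * k) = (X ^ k) ^ 5 := by rw [pow_mul']
  have hab : a * b = 1 + 2 * X ^ k + X ^ (4 * k) - X ^ (5 * k) := by
    rw [ha, hb, h2, h3, h4, h5]; ring
  refine ⟨a, b, ?_, ?_, ?_, ?_, ?_⟩
  · simp [ha, coeff_X_pow, hk0, Ne.symm hk0]
  · simp [hb, coeff_X_pow, hk0, Ne.symm hk0]
  · refine ⟨1 - X ^ k, ?_⟩
    rw [hab, h4, h5]; ring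
  · intro h
    have hc := congrArg (fun p => Polynomial.coeff p (4 * k)) h
    rw [hab] at hc
    have e1 : ¬ (4 * k = 0) := by omega
    have e2 : ¬ (4 * k = k) := by omega
    have e3 : ¬ (4 * k = 5 * k) := by omega
    simp [coeff_X_pow, coeff_one, e1, e2, e3] at hc
  · have hsa : a.support ⊆ {0, k, 2 * k} := by
      intro i hi
      rw [mem_support_iff] at hi
      simp only [Finset.mem_insert, Finset.mem_singleton]
      by_contra hcon
      push_neg at hcon
      exact hi (by simp [ha, coeff_one, coeff_X_pow, hcon.1, hcon.2.1, hcon.2.2])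
    have hsb : b.support ⊆ {0, k, 3 * k} := by
      intro i hi
      rw [mem_support_iff] at hi
      simp only [Finset.mem_insert, Finset.mem_singleton]
      by_contra hcon
      push_neg at hcon
      exact hi (by simp [hb, coeff_one, coeff_X_pow, hcon.1, hcon.2.1, hcon.2.2])
    have hwa : weight a ≤ 3 := by
      refine le_trans (weight_le_of_support_subset a _ hsa) ?_
      rw [Finset.sum_insert (by simp; omega), Finset.sum_insert (by simp; omega),
        Finset.sum_singleton]
      have e1 : ¬ (k = 2 * k) := by omega
      have e2 : ¬ (2 * k = k) := by omega
      have e3 : ¬ (2 * k = 0) := by omega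
      simp [ha, coeff_one, coeff_X_pow, hk0, Ne.symm hk0, e1, e2, e3]
    have hwb : weight b ≤ 3 := by
      refine le_trans (weight_le_of_support_subset b _ hsb) ?_
      rw [Finset.sum_insert (by simp; omega), Finset.sum_insert (by simp; omega),
        Finset.sum_singleton]
      have e1 : ¬ (k = 3 * k) := by omega
      have e2 : ¬ (3 * k = k) := by omega
      have e3 : ¬ (3 * k = 0) := by omega
      simp [hb, coeff_one, coeff_X_pow, hk0, Ne.symm hk0, e1, e2, e3]
    omega
end

section
/- Let f ∈ ℤ[x] be monic of degree N ≥ 2 with coefficients a_0, ..., a_{N-1} (a_0 ≠ 0) satisfying |a_{N-1}| > 1 + |a_0| + |a_1| + ... + |a_{N-2}|. Then f is irreducible over ℚ. -/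
/-!
Let `F` be the image of `f` in `ℂ[X]` and `S = ∑_{i < N-1} |aᵢ|`. Every monic integer factor of
positive degree dividing `f` has a nonzero integer constant term, the product of its roots up to
sign, so it has a root of modulus `≥ 1`. Hence it suffices that `F` has at most one such root
counted with multiplicity. If `z` is one, comparing the terms `a_{N-1} z^{N-1}` and `z^N` of
`F(z) = 0` gives `|z| > 1 + S` (using `|a_{N-1}| ≥ S + 2`). Writing `F = Q · (X - z)`, the
coefficients of `Q` satisfy `|z| |qᵢ| ≤ |q_{i-1}| + |aᵢ|`, whence `∑ |qᵢ| < 1` below the leading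
one, and then every root of `Q` has modulus `< 1`.
-/

open Polynomial Finset

theorem Multiset.norm_prod_lt_one {K : Type*} [NormedField K] {s : Multiset K} (hs : s ≠ 0)
    (h : ∀ x ∈ s, ‖x‖ < 1) : ‖s.prod‖ < 1 := by
  induction s using Multiset.induction_on with
  | empty => exact absurd rfl hs
  | cons a t ih =>
    have ha := h a (Multiset.mem_cons_self a t)
    have ht : ‖t.prod‖ ≤ 1 := by
      rcases eq_or_ne t 0 with rfl | ht
      · simp
      · exact (ih ht fun x hx => h x (Multiset.mem_cons_of_mem hx)).le
    rw [Multiset.prod_cons, norm_mul]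
    exact mul_lt_one_of_nonneg_of_lt_one_left (norm_nonneg a) ha ht

namespace Polynomial

variable {K : Type*} [NormedField K]

theorem exists_mem_roots_one_le_norm [IsAlgClosed K] {P : K[X]} (hP : P.Monic)
    (hdeg : 0 < P.natDegree) (h0 : 1 ≤ ‖P.coeff 0‖) : ∃ w ∈ P.roots, 1 ≤ ‖w‖ := by
  by_contra! h
  have hsplit := IsAlgClosed.splits P
  have hroots : P.roots ≠ 0 := by
    rw [← Multiset.card_pos, ← hsplit.natDegree_eq_card_roots]
    exact hdeg
  have := Multiset.norm_prod_lt_one hroots h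
  rw [hsplit.coeff_zero_eq_prod_roots_of_monic hP, norm_mul, norm_pow, norm_neg, norm_one,
    one_pow, one_mul] at h0
  linarith

theorem Monic.norm_lt_one_of_isRoot {P : K[X]} (hP : P.Monic)
    (hsum : ∑ i ∈ range P.natDegree, ‖P.coeff i‖ < 1) {w : K} (hw : P.IsRoot w) : ‖w‖ < 1 := by
  by_contra! h1
  set m := P.natDegree
  have hpow : w ^ m = -∑ i ∈ range m, P.coeff i * w ^ i := by
    have := hw.eq_zero
    rw [eval_eq_sum_range, sum_range_succ, hP.coeff_natDegree, one_mul] at this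
    linear_combination this
  have hpos : 0 < ‖w‖ ^ m := pow_pos (one_pos.trans_le h1) m
  have : ‖w‖ ^ m ≤ (∑ i ∈ range m, ‖P.coeff i‖) * ‖w‖ ^ m :=
    calc ‖w‖ ^ m = ‖∑ i ∈ range m, P.coeff i * w ^ i‖ := by rw [← norm_pow, hpow, norm_neg]
      _ ≤ ∑ i ∈ range m, ‖P.coeff i‖ * ‖w‖ ^ i := by
        simpa only [norm_mul, norm_pow] using norm_sum_le (range m) fun i => P.coeff i * w ^ i
      _ ≤ ∑ i ∈ range m, ‖P.coeff i‖ * ‖w‖ ^ m := by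
        gcongr with i hi
        exact (mem_range.mp hi).le
      _ = (∑ i ∈ range m, ‖P.coeff i‖) * ‖w‖ ^ m := (sum_mul ..).symm
  nlinarith

theorem Monic.norm_coeff_mul_norm_le {P : K[X]} (hP : P.Monic) {n : ℕ}
    (hdeg : P.natDegree = n + 1) {z : K} (hz : P.IsRoot z) (h1 : 1 ≤ ‖z‖) :
    ‖P.coeff n‖ * ‖z‖ ≤ ‖z‖ ^ 2 + ∑ i ∈ range n, ‖P.coeff i‖ := by
  set r := ‖z‖
  have hterm : P.coeff n * z ^ n = -(z ^ (n + 1) + ∑ i ∈ range n, P.coeff i * z ^ i) := by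
    have := hz.eq_zero
    rw [eval_eq_sum_range, hdeg, sum_range_succ, sum_range_succ, ← hdeg, hP.coeff_natDegree,
      hdeg] at this
    linear_combination this
  have hlow : r * ∑ i ∈ range n, ‖P.coeff i‖ * r ^ i ≤ (∑ i ∈ range n, ‖P.coeff i‖) * r ^ n := by
    rw [mul_sum, sum_mul]
    refine sum_le_sum fun i hi => ?_
    calc r * (‖P.coeff i‖ * r ^ i) = ‖P.coeff i‖ * r ^ (i + 1) := by ring
      _ ≤ ‖P.coeff i‖ * r ^ n := by gcongr; exact mem_range.mp hi
  have hmain : ‖P.coeff n‖ * r ^ n ≤ r ^ (n + 1) + ∑ i ∈ range n, ‖P.coeff i‖ * r ^ i :=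
    calc ‖P.coeff n‖ * r ^ n = ‖z ^ (n + 1) + ∑ i ∈ range n, P.coeff i * z ^ i‖ := by
          rw [← norm_pow, ← norm_mul, hterm, norm_neg]
      _ ≤ r ^ (n + 1) + ∑ i ∈ range n, ‖P.coeff i‖ * r ^ i := by
        refine (norm_add_le _ _).trans ?_
        rw [norm_pow]
        gcongr
        simpa only [norm_mul, norm_pow] using norm_sum_le (range n) fun i => P.coeff i * z ^ i
  have hpos : 0 < r ^ n := pow_pos (one_pos.trans_le h1) n
  have : (‖P.coeff n‖ * r) * r ^ n ≤ (r ^ 2 + ∑ i ∈ range n, ‖P.coeff i‖) * r ^ n := by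
    have := mul_le_mul_of_nonneg_left hmain (one_pos.trans_le h1).le
    rw [pow_succ] at this
    nlinarith
  exact le_of_mul_le_mul_right this hpos

theorem norm_mul_sum_norm_coeff_le (Q : K[X]) (z : K) (m : ℕ) :
    ‖z‖ * ∑ i ∈ range (m + 1), ‖Q.coeff i‖ ≤
      ∑ i ∈ range m, ‖Q.coeff i‖ + ∑ i ∈ range (m + 1), ‖(Q * (X - C z)).coeff i‖ := by
  induction m with
  | zero =>
    have : (Q * (X - C z)).coeff 0 = -(Q.coeff 0 * z) := by simp [mul_coeff_zero]
    simp [this, mul_comm]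
  | succ m ih =>
    have hcoeff : Q.coeff (m + 1) * z = Q.coeff m - (Q * (X - C z)).coeff (m + 1) := by
      rw [coeff_mul_X_sub_C]; ring
    have hstep : ‖z‖ * ‖Q.coeff (m + 1)‖ ≤ ‖Q.coeff m‖ + ‖(Q * (X - C z)).coeff (m + 1)‖ := by
      rw [mul_comm, ← norm_mul, hcoeff]
      exact norm_sub_le _ _
    rw [sum_range_succ _ (m + 1), sum_range_succ _ (m + 1), mul_add]
    linarith [sum_range_succ (fun i => ‖Q.coeff i‖) m]

theorem sum_norm_coeff_lt_one_of_mul_X_sub_C (Q : K[X]) (z : K) (m : ℕ)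
    (h : 1 + ∑ i ∈ range m, ‖(Q * (X - C z)).coeff i‖ < ‖z‖) :
    ∑ i ∈ range m, ‖Q.coeff i‖ < 1 := by
  cases m with
  | zero => simp
  | succ m =>
    by_contra! hB
    have hle := norm_mul_sum_norm_coeff_le Q z m
    have hmono : ∑ i ∈ range m, ‖Q.coeff i‖ ≤ ∑ i ∈ range (m + 1), ‖Q.coeff i‖ :=
      sum_le_sum_of_subset_of_nonneg (range_subset_range.mpr m.le_succ) fun _ _ _ => norm_nonneg _
    have hS : 0 ≤ ∑ i ∈ range (m + 1), ‖(Q * (X - C z)).coeff i‖ :=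
      sum_nonneg fun _ _ => norm_nonneg _
    have : ‖z‖ - 1 ≤ (‖z‖ - 1) * ∑ i ∈ range (m + 1), ‖Q.coeff i‖ :=
      le_mul_of_one_le_right (by linarith) hB
    linarith

theorem Monic.card_filter_roots_one_le_norm_le_one {F : K[X]} (hF : F.Monic) {n : ℕ}
    (hdeg : F.natDegree = n + 1)
    (hcoeff : ∑ i ∈ range n, ‖F.coeff i‖ + 2 ≤ ‖F.coeff n‖) :
    (F.roots.filter fun w => 1 ≤ ‖w‖).card ≤ 1 := by
  by_cases hbig : ∃ z ∈ F.roots, 1 ≤ ‖z‖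
  swap
  · push Not at hbig
    rw [Multiset.filter_eq_nil.mpr fun w hw => (hbig w hw).not_ge]
    exact zero_le_one
  obtain ⟨z, hzF, hz1⟩ := hbig
  have hz : F.IsRoot z := isRoot_of_mem_roots hzF
  -- The `+ 2` in `hcoeff`, a gap that integrality provides, is what lifts `‖z‖` above `1 + ∑`.
  have hzbig : 1 + ∑ i ∈ range n, ‖F.coeff i‖ < ‖z‖ := by
    nlinarith [hF.norm_coeff_mul_norm_le hdeg hz hz1]
  set Q := F /ₘ (X - C z)
  have hQF : Q * (X - C z) = F := by
    rw [mul_comm]; exact mul_divByMonic_eq_iff_isRoot.mpr hz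
  have hQ : Q.Monic := (monic_X_sub_C z).of_mul_monic_right (by rw [hQF]; exact hF)
  have hQdeg : Q.natDegree = n := by
    rw [natDegree_divByMonic F (monic_X_sub_C z), natDegree_X_sub_C, hdeg, Nat.add_sub_cancel]
  have hQsmall : ∀ w ∈ Q.roots, ¬ 1 ≤ ‖w‖ := fun w hw =>
    not_le.mpr <| hQ.norm_lt_one_of_isRoot
      (hQdeg ▸ sum_norm_coeff_lt_one_of_mul_X_sub_C Q z n (hQF ▸ hzbig)) (isRoot_of_mem_roots hw)
  rw [← hQF, roots_mul (hQF ▸ hF.ne_zero), roots_X_sub_C, Multiset.filter_add,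
    Multiset.filter_eq_nil.mpr hQsmall, zero_add]
  exact (Multiset.card_le_card (Multiset.filter_le _ _)).trans_eq (Multiset.card_singleton z)

theorem Monic.irreducible_of_card_filter_roots_one_le_norm_le_one {f : ℤ[X]} (hf : f.Monic)
    (hdeg : f.natDegree ≠ 0) (h0 : f.coeff 0 ≠ 0)
    (hroots : ((f.map (Int.castRingHom ℂ)).roots.filter fun w => 1 ≤ ‖w‖).card ≤ 1) :
    Irreducible f := by
  refine hf.irreducible_iff_natDegree.mpr ⟨fun h => hdeg (by simp [h]), fun p q hp hq hpq => ?_⟩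
  by_contra! hpos
  have hp0 : p.coeff 0 ≠ 0 := fun h => h0 (by rw [← hpq, mul_coeff_zero, h, zero_mul])
  have hq0 : q.coeff 0 ≠ 0 := fun h => h0 (by rw [← hpq, mul_coeff_zero, h, mul_zero])
  have hcount (g : ℤ[X]) (hg : g.Monic) (hgdeg : g.natDegree ≠ 0) (hg0 : g.coeff 0 ≠ 0) :
      0 < ((g.map (Int.castRingHom ℂ)).roots.filter fun w => 1 ≤ ‖w‖).card := by
    have hnorm : 1 ≤ ‖(g.map (Int.castRingHom ℂ)).coeff 0‖ := by
      rw [coeff_map, eq_intCast, Complex.norm_intCast]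
      exact_mod_cast Int.one_le_abs hg0
    obtain ⟨w, hw, hw1⟩ := exists_mem_roots_one_le_norm (hg.map _)
      (by rwa [hg.natDegree_map, Nat.pos_iff_ne_zero]) hnorm
    exact Multiset.card_pos_iff_exists_mem.mpr ⟨w, Multiset.mem_filter.mpr ⟨hw, hw1⟩⟩
  have hne : p.map (Int.castRingHom ℂ) * q.map (Int.castRingHom ℂ) ≠ 0 := by
    rw [← Polynomial.map_mul]; exact ((hp.mul hq).map _).ne_zero
  rw [← hpq, Polynomial.map_mul, roots_mul hne, Multiset.filter_add, Multiset.card_add] at hroots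
  have := hcount p hp hpos.1 hp0
  have := hcount q hq hpos.2 hq0
  omega

end Polynomial

theorem perron_criterion_general (f : ℤ[X]) (N : ℕ)
    (hmonic : f.Monic) (hdeg : f.natDegree = N) (h0 : f.coeff 0 ≠ 0)
    (hperron : 1 + ∑ i ∈ Finset.range (N - 1), |f.coeff i| < |f.coeff (N - 1)|) :
    Irreducible (f.map (Int.castRingHom ℚ)) := by
  obtain _ | n := N
  · rw [hmonic.natDegree_eq_zero.mp hdeg] at hperron
    simp at hperron
  rw [← algebraMap_int_eq, ← hmonic.irreducible_iff_irreducible_map_fraction_map]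
  refine hmonic.irreducible_of_card_filter_roots_one_le_norm_le_one (by omega) h0 ?_
  refine (hmonic.map _).card_filter_roots_one_le_norm_le_one (by rwa [hmonic.natDegree_map]) ?_
  have hnorm (i : ℕ) : ‖(f.map (Int.castRingHom ℂ)).coeff i‖ = |(f.coeff i : ℝ)| := by
    rw [coeff_map, eq_intCast, Complex.norm_intCast]
  simp only [hnorm, Nat.add_sub_cancel] at hperron ⊢
  exact_mod_cast (by omega : ∑ i ∈ range n, |f.coeff i| + 2 ≤ |f.coeff n|)

theorem perron_criterion (f : ℤ[X]) (N : ℕ) (hN : 2 ≤ N)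
    (hmonic : f.Monic) (hdeg : f.natDegree = N) (h0 : f.coeff 0 ≠ 0)
    (hperron : 1 + ∑ i ∈ Finset.range (N - 1), |f.coeff i| < |f.coeff (N - 1)|) :
    Irreducible (f.map (Int.castRingHom ℚ)) :=
  perron_criterion_general f N hmonic hdeg h0 hperron
end

section
/- For integers k and N with |k| ≥ 3 and N ≥ 2, the polynomials x^N + kx + 1 and x^N - kx - 1 are irreducible over ℚ. -/
/-!
If `X ^ N + k X + ε` (with `ε = ±1`) were a product of two nonconstant monic integer polynomials,
each factor would have constant term `±1`, hence a complex root in the closed unit disk, so the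
product would have two roots there counted with multiplicity. But dividing out one such root `z`
leaves the quotient `∑ X ^ i z ^ (N - 1 - i) + k`, and a root `w` of it in the disk would give
`|k| ≤ ∑ |z| ^ i`; together with `|k| |z| ≤ |z| ^ N + 1` this forces `|k| ≤ 2`, which is
Perron's bound for the reversed polynomial.
-/

open Polynomial Finset

theorem geom_sum₂_add_ne_zero_of_norm_le_one {k ε z w : ℂ} {N : ℕ} (hk : 1 + ‖ε‖ < ‖k‖)
    (hz : z ^ N + k * z + ε = 0) (hz1 : ‖z‖ ≤ 1) (hw1 : ‖w‖ ≤ 1) :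
    ∑ i ∈ range N, w ^ i * z ^ (N - 1 - i) + k ≠ 0 := by
  intro hw
  set t := ‖z‖
  have hkz : ‖k‖ * t ≤ t ^ N + ‖ε‖ := calc
    ‖k‖ * t = ‖z ^ N + ε‖ := by rw [← norm_mul, ← norm_neg]; congr 1; linear_combination -hz
    _ ≤ t ^ N + ‖ε‖ := by grw [norm_add_le, norm_pow]
  have hk_le : ‖k‖ ≤ ∑ i ∈ range N, t ^ i := calc
    ‖k‖ = ‖∑ i ∈ range N, w ^ i * z ^ (N - 1 - i)‖ := by
      rw [← norm_neg]; congr 1; linear_combination -hw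
    _ ≤ ∑ i ∈ range N, t ^ (N - 1 - i) := by
      refine (norm_sum_le _ _).trans (sum_le_sum fun i _ => ?_)
      rw [norm_mul, norm_pow, norm_pow]
      exact mul_le_of_le_one_left (by positivity) (pow_le_one₀ (norm_nonneg w) hw1)
    _ = ∑ i ∈ range N, t ^ i := sum_range_reflect (t ^ ·) N
  -- `‖k‖ = ‖k‖ (1 - t) + ‖k‖ t ≤ (1 - t ^ N) + (t ^ N + ‖ε‖)`
  have hgeom := mul_neg_geom_sum t N
  nlinarith [mul_le_mul_of_nonneg_left hk_le (sub_nonneg.mpr hz1)]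

namespace Polynomial

theorem map_X_pow_add_C_mul_X_add_C {R S : Type*} [Semiring R] [Semiring S] (φ : R →+* S)
    (N : ℕ) (a b : R) : (X ^ N + C a * X + C b).map φ = X ^ N + C (φ a) * X + C (φ b) := by
  simp only [Polynomial.map_add, Polynomial.map_pow, Polynomial.map_mul, map_X, map_C]

theorem X_pow_add_C_mul_X_add_C_eq_mul {k ε z : ℂ} {N : ℕ} (hz : z ^ N + k * z + ε = 0) :
    X ^ N + C k * X + C ε = (X - C z) * (∑ i ∈ range N, X ^ i * C z ^ (N - 1 - i) + C k) := by
  have hzC : C z ^ N + C k * C z + C ε = 0 := by simpa using congrArg C hz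
  linear_combination hzC - geom_sum₂_mul X (C z) N

noncomputable def closedUnitDiskRoots (p : ℂ[X]) : Multiset ℂ :=
  p.roots.filter (‖·‖ ≤ 1)

theorem closedUnitDiskRoots_mul {p q : ℂ[X]} (hpq : p * q ≠ 0) :
    (p * q).closedUnitDiskRoots = p.closedUnitDiskRoots + q.closedUnitDiskRoots := by
  rw [closedUnitDiskRoots, roots_mul hpq, Multiset.filter_add]; rfl

theorem closedUnitDiskRoots_ne_zero {p : ℂ[X]} (hp : p.Monic) (hdeg : p.natDegree ≠ 0)
    (h0 : ‖p.coeff 0‖ ≤ 1) : p.closedUnitDiskRoots ≠ 0 := by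
  intro hnone
  have hlarge : ∀ z ∈ p.roots, 1 < ‖z‖ := fun z hz =>
    not_le.mp (Multiset.filter_eq_nil.mp hnone z hz)
  obtain ⟨r, hr⟩ : ∃ r, r ∈ p.roots := Multiset.card_pos_iff_exists_mem.mp
    (by rw [IsAlgClosed.card_roots_eq_natDegree]; omega)
  obtain ⟨s, hrs⟩ := Multiset.exists_cons_of_mem hr
  have hs : 1 ≤ (s.map (‖·‖)).prod := Multiset.one_le_prod fun x hx => by
    obtain ⟨a, ha, rfl⟩ := Multiset.mem_map.mp hx
    exact (hlarge a (hrs ▸ Multiset.mem_cons_of_mem ha)).le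
  have hprod : ‖p.coeff 0‖ = ‖r‖ * (s.map (‖·‖)).prod := by
    rw [(IsAlgClosed.splits p).coeff_zero_eq_prod_roots_of_monic hp, norm_mul, norm_pow, norm_neg,
      norm_one, one_pow, one_mul, hrs, ← normHom_apply, map_multiset_prod, Multiset.map_cons,
      Multiset.prod_cons]
    rfl
  nlinarith [hlarge r hr]

theorem closedUnitDiskRoots_map_ne_zero {f : ℤ[X]} (hf : f.Monic) (hdeg : f.natDegree ≠ 0)
    (h0 : IsUnit (f.coeff 0)) : (f.map (Int.castRingHom ℂ)).closedUnitDiskRoots ≠ 0 := by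
  refine closedUnitDiskRoots_ne_zero (hf.map _) ?_ ?_
  · rwa [natDegree_map_eq_of_injective (RingHom.injective_int _)]
  · rw [coeff_map, eq_intCast, Complex.norm_intCast, ← Int.cast_abs, Int.isUnit_iff_abs_eq.mp h0,
      Int.cast_one]

theorem irreducible_of_card_closedUnitDiskRoots_le_one {f : ℤ[X]} (hf : f.Monic)
    (hdeg : f.natDegree ≠ 0) (h0 : IsUnit (f.coeff 0))
    (hroots : (f.map (Int.castRingHom ℂ)).closedUnitDiskRoots.card ≤ 1) : Irreducible f := by
  refine hf.irreducible_iff_natDegree.mpr ⟨fun h => hdeg (by simp [h]), fun g h hg hh hgh => ?_⟩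
  by_contra! hnonconst
  have hunit : IsUnit (g.coeff 0 * h.coeff 0) := by rwa [← mul_coeff_zero, hgh]
  have hne : g.map (Int.castRingHom ℂ) * h.map (Int.castRingHom ℂ) ≠ 0 := by
    rw [← Polynomial.map_mul, hgh]; exact (hf.map _).ne_zero
  rw [← hgh, Polynomial.map_mul, closedUnitDiskRoots_mul hne, Multiset.card_add] at hroots
  have hg' := closedUnitDiskRoots_map_ne_zero hg hnonconst.1 (isUnit_of_mul_isUnit_left hunit)
  have hh' := closedUnitDiskRoots_map_ne_zero hh hnonconst.2 (isUnit_of_mul_isUnit_right hunit)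
  rw [← Multiset.card_pos] at hg' hh'
  omega

theorem card_closedUnitDiskRoots_X_pow_add_C_mul_X_add_C_le_one {k ε : ℂ} (N : ℕ)
    (hk : 1 + ‖ε‖ < ‖k‖) : (X ^ N + C k * X + C ε).closedUnitDiskRoots.card ≤ 1 := by
  by_contra! hcard
  obtain ⟨z, hz⟩ := Multiset.card_pos_iff_exists_mem.mp (zero_lt_one.trans hcard)
  obtain ⟨hzroot, hz1⟩ := Multiset.mem_filter.mp hz
  have hzP : z ^ N + k * z + ε = 0 := by simpa using (mem_roots'.mp hzroot).2
  rw [X_pow_add_C_mul_X_add_C_eq_mul hzP] at hcard hzroot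
  rw [closedUnitDiskRoots_mul (mem_roots'.mp hzroot).1, Multiset.card_add] at hcard
  set Q := ∑ i ∈ range N, X ^ i * C z ^ (N - 1 - i) + C k
  have hlinear : (X - C z).closedUnitDiskRoots.card ≤ (X - C z).roots.card :=
    Multiset.card_le_card (Multiset.filter_le _ _)
  rw [roots_X_sub_C, Multiset.card_singleton] at hlinear
  obtain ⟨w, hw⟩ : ∃ w, w ∈ Q.closedUnitDiskRoots :=
    Multiset.card_pos_iff_exists_mem.mp (by omega)
  obtain ⟨hwroot, hw1⟩ := Multiset.mem_filter.mp hw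
  refine geom_sum₂_add_ne_zero_of_norm_le_one hk hzP hz1 hw1 ?_
  simpa [Q, eval_finsetSum] using (mem_roots'.mp hwroot).2

theorem irreducible_X_pow_add_C_mul_X_add_C {k ε : ℤ} {N : ℕ} (hk : 2 < |k|) (hε : IsUnit ε)
    (hN : 2 ≤ N) : Irreducible (X ^ N + C (k : ℚ) * X + C (ε : ℚ)) := by
  have hlow : degree (C k * X + C ε) < N :=
    degree_linear_le.trans_lt (by exact_mod_cast (by omega : 1 < N))
  have hmonic : (X ^ N + C k * X + C ε).Monic := by rw [add_assoc]; exact monic_X_pow_add hlow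
  have hdeg : (X ^ N + C k * X + C ε).natDegree = N := by
    rw [add_assoc, natDegree_add_eq_left_of_degree_lt (by rwa [degree_X_pow]), natDegree_X_pow]
  have hint : Irreducible (X ^ N + C k * X + C ε) := by
    refine irreducible_of_card_closedUnitDiskRoots_le_one hmonic (by omega) ?_ ?_
    · simpa [coeff_X_pow, show 0 ≠ N by omega] using hε
    · rw [map_X_pow_add_C_mul_X_add_C, eq_intCast, eq_intCast]
      refine card_closedUnitDiskRoots_X_pow_add_C_mul_X_add_C_le_one N ?_
      rw [Complex.norm_intCast, Complex.norm_intCast, ← Int.cast_abs, ← Int.cast_abs,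
        Int.isUnit_iff_abs_eq.mp hε]
      exact_mod_cast (by omega : 1 + 1 < |k|)
  have hrat := (IsPrimitive.Int.irreducible_iff_irreducible_map_cast hmonic.isPrimitive).mp hint
  rwa [map_X_pow_add_C_mul_X_add_C, eq_intCast, eq_intCast] at hrat

end Polynomial

theorem irreducible_xN_pm_kx_pm_one (k : ℤ) (N : ℕ) (hk : 3 ≤ |k|) (hN : 2 ≤ N) :
    Irreducible (X ^ N + C (k : ℚ) * X + 1 : ℚ[X]) ∧
    Irreducible (X ^ N - C (k : ℚ) * X - 1 : ℚ[X]) := by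
  constructor
  · simpa using irreducible_X_pow_add_C_mul_X_add_C (ε := 1) (by omega) isUnit_one hN
  · have h := irreducible_X_pow_add_C_mul_X_add_C (k := -k) (ε := -1) (by rw [abs_neg]; omega)
      isUnit_one.neg hN
    simpa [sub_eq_add_neg] using h
end

section
/- There are no integers s, t, u, v such that x^6 + kx^5 + lx + 1 = (x³ + sx² + tx + 1)(x³ + ux² + vx + 1) or x^6 + kx^5 + lx + 1 = (x³ + sx² + tx - 1)(x³ + ux² + vx - 1) for any integers k ≠ l. -/
open Polynomial

/-!
Comparing the coefficients of `x⁴, x³, x²` in `(x³ + sx² + tx + c)(x³ + ux² + vx + c)`,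
`c = ±1`, with the sextic gives `t + v + su = 0`, `sv + tu + 2c = 0`, `c(s + u) + tv = 0`.
Then `st` and `uv` are the roots of `z² - (ab + 2c)z + c·ab` with `a = s + u`, `b = t + v`,
so `(ab)² + 4` is a square and `ab = 0`. Each of the four resulting cases forces an integer
cube to equal `±2`.
-/

theorem cubic_mul_cubic {R : Type*} [CommRing R] (s t u v c : R) :
    (X ^ 3 + C s * X ^ 2 + C t * X + C c) * (X ^ 3 + C u * X ^ 2 + C v * X + C c) =
      X ^ 6 + C (s + u) * X ^ 5 + C (t + v + s * u) * X ^ 4 +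
        C (s * v + t * u + 2 * c) * X ^ 3 + C (c * (s + u) + t * v) * X ^ 2 +
        C (c * (t + v)) * X + C (c ^ 2) := by
  simp only [map_add, map_mul, map_pow, map_ofNat]
  ring

theorem coeff_eqs_of_eq_cubic_mul_cubic {R : Type*} [CommRing R] {k l m s t u v c : R}
    (h : X ^ 6 + C k * X ^ 5 + C l * X + C m =
      (X ^ 3 + C s * X ^ 2 + C t * X + C c) * (X ^ 3 + C u * X ^ 2 + C v * X + C c)) :
    t + v + s * u = 0 ∧ s * v + t * u + 2 * c = 0 ∧ c * (s + u) + t * v = 0 := by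
  rw [cubic_mul_cubic] at h
  have hcoeff (n : ℕ) := congrArg (coeff · n) h.symm
  simp only [coeff_add, coeff_C_mul_X_pow, coeff_C_mul_X, coeff_X_pow, coeff_C] at hcoeff
  exact ⟨by simpa using hcoeff 4, by simpa using hcoeff 3, by simpa using hcoeff 2⟩

theorem Int.eq_zero_of_sq_eq_sq_add_four {c d : ℤ} (h : c ^ 2 = d ^ 2 + 4) : d = 0 := by
  have hlt : |d| < |c| := sq_lt_sq.mp (by linarith)
  rw [← sq_abs c, ← sq_abs d] at h
  rcases (by omega : |c| = |d| + 1 ∨ |d| + 2 ≤ |c|) with h' | h'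
  · have : 2 * |d| = 3 := by rw [h'] at h; linear_combination h
    omega
  · exact abs_nonpos_iff.mp (by nlinarith [abs_nonneg d])

theorem Int.pow_three_ne_two_mul {n c : ℤ} (hc : c ^ 2 = 1) : n ^ 3 ≠ 2 * c := by
  intro h
  have h4 : (n ^ 2) ^ 3 = 4 := by linear_combination (n ^ 3 + 2 * c) * h + 4 * hc
  rcases (by omega : n ^ 2 ≤ 1 ∨ 2 ≤ n ^ 2) with hn | hn
  · linarith [pow_le_one₀ (sq_nonneg n) hn (n := 3)]
  · linarith [pow_le_pow_left₀ (by norm_num) hn 3]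

theorem Int.not_cubic_mul_cubic_coeff_eqs {s t u v c : ℤ} (hc : c ^ 2 = 1) :
    ¬ (t + v + s * u = 0 ∧ s * v + t * u + 2 * c = 0 ∧ c * (s + u) + t * v = 0) := by
  rintro ⟨h4, h3, h2⟩
  have hab : (s + u) * (t + v) = 0 := by
    have hsum : s * t + u * v = (s + u) * (t + v) + 2 * c := by linear_combination -h3
    have hprod : (s * t) * (u * v) = c * ((s + u) * (t + v)) := by
      linear_combination t * v * h4 - (t + v) * h2
    -- the discriminant of `z² - (st + uv)z + st·uv`
    refine Int.eq_zero_of_sq_eq_sq_add_four (c := s * t - u * v) ?_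
    linear_combination (s * t + u * v + (s + u) * (t + v) + 2 * c) * hsum - 4 * hprod + 4 * hc
  rcases mul_eq_zero.mp hab with hsu | htv
  · obtain rfl : u = -s := by linarith
    rcases mul_eq_zero.mp (by linear_combination h2 : t * v = 0) with rfl | rfl
    · exact Int.pow_three_ne_two_mul (c := -c) (by linear_combination hc)
        (by linear_combination h3 - s * h4)
    · exact Int.pow_three_ne_two_mul hc (by linear_combination -h3 - s * h4)
  · obtain rfl : v = -t := by linarith
    rcases mul_eq_zero.mp (by linear_combination h4 : s * u = 0) with rfl | rfl
    · exact Int.pow_three_ne_two_mul (c := -1) (by norm_num)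
        (by linear_combination -t * h2 + c * h3 - 2 * hc)
    · exact Int.pow_three_ne_two_mul (c := 1) (by norm_num)
        (by linear_combination -t * h2 - c * h3 + 2 * hc)

theorem no_cubic_cubic_factorization_general (k l : ℤ) (s t u v : ℤ) :
    ¬ ((X ^ 6 + C k * X ^ 5 + C l * X + 1 : ℤ[X]) =
          (X ^ 3 + C s * X ^ 2 + C t * X + 1) * (X ^ 3 + C u * X ^ 2 + C v * X + 1) ∨
       (X ^ 6 + C k * X ^ 5 + C l * X + 1 : ℤ[X]) =
          (X ^ 3 + C s * X ^ 2 + C t * X - 1) * (X ^ 3 + C u * X ^ 2 + C v * X - 1)) := by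
  rintro (h | h)
  · rw [← map_one C] at h
    exact Int.not_cubic_mul_cubic_coeff_eqs (one_pow 2) (coeff_eqs_of_eq_cubic_mul_cubic h)
  · rw [sub_eq_add_neg, sub_eq_add_neg, ← map_one C, ← map_neg] at h
    exact Int.not_cubic_mul_cubic_coeff_eqs (by norm_num) (coeff_eqs_of_eq_cubic_mul_cubic h)

theorem no_cubic_cubic_factorization (k l : ℤ) (hkl : k ≠ l) (s t u v : ℤ) :
    ¬ ((X ^ 6 + C k * X ^ 5 + C l * X + 1 : ℤ[X]) =
          (X ^ 3 + C s * X ^ 2 + C t * X + 1) * (X ^ 3 + C u * X ^ 2 + C v * X + 1) ∨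
       (X ^ 6 + C k * X ^ 5 + C l * X + 1 : ℤ[X]) =
          (X ^ 3 + C s * X ^ 2 + C t * X - 1) * (X ^ 3 + C u * X ^ 2 + C v * X - 1)) :=
  no_cubic_cubic_factorization_general k l s t u v
end
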